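/- arXiv:1804.06198 — 4 statements merged into one kernel-verified Lean document; each statement's English description precedes it below -/
import Mathlib

section
/- Let s : V → V be an involution and let A, B be multisets over V. Then A and B are s-congruent (there is a matching of A with B where each element a is matched to a or s(a)) if and only if A + map s A = B + map s B as multisets. -/
/-- `A` and `B` are s-congruent iff their double coverings agree:
`A + map s A = B + map s B`. -/
theorem stmt2 {V : Type*} (s : V → V) (hs : Function.Involutive s)
    (A B : Multiset V) :
    Multiset.Rel (fun a b => b = a ∨ b = s a) A B ↔
      A + A.map s = B + B.map s := by
  constructor
  · intro h
    induction h with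
    | zero => rfl
    | @cons a b A' B' hab _ ih =>
      have e1 : ∀ (x : V) (X : Multiset V),
          (x ::ₘ X) + (x ::ₘ X).map s = x ::ₘ s x ::ₘ (X + X.map s) := by
        intro x X
        rw [Multiset.map_cons, Multiset.cons_add, Multiset.add_cons, Multiset.cons_swap]
      rcases hab with rfl | rfl
      · rw [e1, e1, ih]
      · rw [e1, e1, ih, hs, Multiset.cons_swap]
  · intro h
    induction A using Multiset.induction generalizing B with
    | empty =>
      simp only [Multiset.map_zero, zero_add] at h
      have : B = 0 := by
        by_contra hB
        obtain ⟨b, hb⟩ := Multiset.exists_mem_of_ne_zero hB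
        have : b ∈ (0 : Multiset V) := h ▸ Multiset.mem_add.2 (Or.inl hb)
        simp at this
      simp [this]
    | cons a A' ih =>
      have e1 : ∀ (x : V) (X : Multiset V),
          (x ::ₘ X) + (x ::ₘ X).map s = x ::ₘ s x ::ₘ (X + X.map s) := by
        intro x X
        rw [Multiset.map_cons, Multiset.cons_add, Multiset.add_cons, Multiset.cons_swap]
      have ha : a ∈ B + B.map s := by rw [← h]; simp
      rcases Multiset.mem_add.1 ha with hB | hB
      · obtain ⟨B', rfl⟩ := Multiset.exists_cons_of_mem hB
        have key : A' + A'.map s = B' + B'.map s := by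
          have h2 := h
          rw [e1, e1, Multiset.cons_inj_right, Multiset.cons_inj_right] at h2
          exact h2
        exact Multiset.Rel.cons (Or.inl rfl) (ih B' key)
      · obtain ⟨b, hb, rfl⟩ := Multiset.mem_map.1 hB
        obtain ⟨B', rfl⟩ := Multiset.exists_cons_of_mem hb
        have key : A' + A'.map s = B' + B'.map s := by
          have h2 := h
          rw [e1, e1, hs, Multiset.cons_swap,
            Multiset.cons_inj_right, Multiset.cons_inj_right] at h2
          exact h2
        exact Multiset.Rel.cons (Or.inr (hs b).symm) (ih B' key)
end

section
/- Let s : V → V be an involution. The map D : Multiset V → Multiset V given by D(A) = A + map s A satisfies: D(A) = D(B) implies A and B are s-congruent, i.e., there exists a bijective matching of A with B in which each element a ∈ A is matched to an element equal to a or to s(a). -/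
/-- If the double coverings `D(A) = A + map s A` and `D(B)` coincide, then
`A` and `B` are s-congruent. -/
theorem stmt3 {V : Type*} (s : V → V) (hs : Function.Involutive s)
    (A B : Multiset V) (h : A + A.map s = B + B.map s) :
    Multiset.Rel (fun a b => b = a ∨ b = s a) A B := by
  classical
  induction A using Multiset.strongInductionOn generalizing B with
  | ih A ih =>
    rcases Multiset.empty_or_exists_mem A with rfl | ⟨a, ha⟩
    · simp only [Multiset.map_zero, zero_add] at h
      obtain ⟨rfl, -⟩ := add_eq_zero.mp h.symm
      exact Multiset.rel_zero_left.mpr rfl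
    · -- find a match for a in B
      have hmem : a ∈ B + B.map s := by
        rw [← h]; exact Multiset.mem_add.mpr (Or.inl ha)
      have hb : ∃ b ∈ B, b = a ∨ b = s a := by
        rcases Multiset.mem_add.mp hmem with hB | hB
        · exact ⟨a, hB, Or.inl rfl⟩
        · obtain ⟨c, hc, hca⟩ := Multiset.mem_map.mp hB
          exact ⟨c, hc, Or.inr (by rw [← hca, hs c])⟩
      obtain ⟨b, hbB, hmatch⟩ := hb
      set A' := A.erase a with hA'
      set B' := B.erase b with hB'
      have hAe : A = a ::ₘ A' := (Multiset.cons_erase ha).symm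
      have hBe : B = b ::ₘ B' := (Multiset.cons_erase hbB).symm
      have key : A' + A'.map s = B' + B'.map s := by
        have h' : a ::ₘ s a ::ₘ (A' + A'.map s) = b ::ₘ s b ::ₘ (B' + B'.map s) := by
          have := h
          rw [hAe, hBe] at this
          simpa [Multiset.map_cons, Multiset.cons_add, Multiset.add_cons,
            Multiset.cons_swap] using this
        rcases hmatch with rfl | rfl
        · simpa using h'
        · rw [hs a, Multiset.cons_swap] at h'
          simpa using h'
      have hlt : A' < A := by
        rw [hAe]; exact Multiset.lt_cons_self A' a
      have hrel := ih A' hlt B' key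
      rw [hAe, hBe]
      exact Multiset.Rel.cons hmatch hrel
end

section
/- Let s : M → M be an involutive homomorphism of a commutative monoid M, and define the double covering homomorphism D : M → M by D(x) = x * s(x). If M is a free commutative monoid on a basis P closed under s, then D(x) = D(y) if and only if x and y are s-congruent, i.e. x and y have equal images in the quotient of M by the congruence generated by identifying each basis element p with s(p). -/
private theorem stmt8_forward {P : Type*} (σ : P → P) (hσ : Function.Involutive σ) :
    ∀ x y : Multiset P, x + x.map σ = y + y.map σ →
      Multiset.Rel (fun a b => b = a ∨ b = σ a) x y := by
  classical
  intro x
  induction x using Multiset.strongInductionOn with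
  | ih x ih =>
    intro y h
    rcases Multiset.empty_or_exists_mem x with rfl | ⟨a, ha⟩
    · simp only [Multiset.map_zero, add_zero, zero_add] at h
      have hy : y = 0 := by
        have := congrArg Multiset.card h
        simp at this
        exact Multiset.card_eq_zero.mp (by omega)
      subst hy
      exact Multiset.Rel.zero
    · have hay : a ∈ y + y.map σ := by
        rw [← h]; exact Multiset.mem_add.mpr (Or.inl ha)
      obtain ⟨b, hb, hab⟩ : ∃ b ∈ y, b = a ∨ b = σ a := by
        rcases Multiset.mem_add.mp hay with h1 | h1
        · exact ⟨a, h1, Or.inl rfl⟩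
        · obtain ⟨c, hc, hca⟩ := Multiset.mem_map.mp h1
          exact ⟨c, hc, Or.inr (by rw [← hca, hσ])⟩
      have hx : x = a ::ₘ x.erase a := (Multiset.cons_erase ha).symm
      have hy : y = b ::ₘ y.erase b := (Multiset.cons_erase hb).symm
      have h' : σ a ::ₘ a ::ₘ (x.erase a + (x.erase a).map σ)
          = σ b ::ₘ b ::ₘ (y.erase b + (y.erase b).map σ) := by
        rw [hx, hy] at h
        simpa [Multiset.cons_add, Multiset.add_cons] using h
      have key : x.erase a + (x.erase a).map σ = y.erase b + (y.erase b).map σ := by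
        rcases hab with rfl | rfl
        · exact (Multiset.cons_inj_right _).mp ((Multiset.cons_inj_right _).mp h')
        · rw [hσ a] at h'
          conv_lhs at h' => rw [Multiset.cons_swap]
          exact (Multiset.cons_inj_right _).mp ((Multiset.cons_inj_right _).mp h')
      have hrel := ih (x.erase a) (Multiset.erase_lt.mpr ha) (y.erase b) key
      rw [hx, hy]
      exact Multiset.Rel.cons hab hrel

/-- Free commutative monoid version (multisets over the basis `P`): the double
covering `D(x) = x * s(x)` identifies exactly the s-congruent elements. -/
theorem stmt8 {P : Type*} (σ : P → P) (hσ : Function.Involutive σ)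
    (x y : Multiset P) :
    x + x.map σ = y + y.map σ ↔
      Multiset.Rel (fun a b => b = a ∨ b = σ a) x y := by
  constructor
  · exact stmt8_forward σ hσ x y
  · intro h
    induction h with
    | zero => rfl
    | @cons a b x y hab h ih =>
      simp only [Multiset.map_cons, Multiset.cons_add, Multiset.add_cons]
      rw [ih]
      rcases hab with rfl | rfl
      · rfl
      · rw [hσ a, Multiset.cons_swap]
end

section
/- Let s : V → V be an involution and e the relation e(p, q) ↔ (q = p ∨ q = s p). Then for any multisets A, B over V, Multiset.Rel e A B holds if and only if A + Multiset.map s A = B + Multiset.map s B. -/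
/-- s-congruence (`Multiset.Rel e`) is equivalent to equality of double
coverings `A + map s A = B + map s B`. -/
theorem stmt12 {V : Type*} (s : V → V) (hs : Function.Involutive s)
    (A B : Multiset V) :
    Multiset.Rel (fun p q => q = p ∨ q = s p) A B ↔
      A + Multiset.map s A = B + Multiset.map s B := by
  have lem : ∀ (x : V) (X Y : Multiset V),
      (x ::ₘ X) + (s x ::ₘ Y) = x ::ₘ s x ::ₘ (X + Y) := fun x X Y => by
    rw [Multiset.cons_add, Multiset.add_cons]
  constructor
  · intro h
    induction h with
    | zero => rfl
    | cons hab _ ih =>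
      rename_i a b A' B' _
      simp only [Multiset.map_cons]
      rcases hab with rfl | rfl
      · rw [lem, ih, lem]
      · rw [lem, ih, lem, hs a, Multiset.cons_swap]
  · intro h
    induction A using Multiset.strongInductionOn generalizing B with
    | ih A ih =>
      rcases A.empty_or_exists_mem with rfl | ⟨a, ha⟩
      · simp only [Multiset.map_zero, add_zero] at h
        have : B = 0 := by
          by_contra hB
          obtain ⟨b, hb⟩ := Multiset.exists_mem_of_ne_zero hB
          have : b ∈ (0 : Multiset V) := (h ▸ Multiset.mem_add.2 (Or.inl hb))
          simp at this
        simp [this]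
      · have haB : a ∈ B ∨ s a ∈ B := by
          have : a ∈ B + Multiset.map s B := by
            rw [← h]; exact Multiset.mem_add.2 (Or.inl ha)
          rcases Multiset.mem_add.1 this with h1 | h1
          · exact Or.inl h1
          · obtain ⟨b, hb, hba⟩ := Multiset.mem_map.1 h1
            exact Or.inr (by rw [← hba, hs b]; exact hb)
        obtain ⟨A', rfl⟩ := Multiset.exists_cons_of_mem ha
        have key : ∀ b, (b = a ∨ b = s a) → b ∈ B →
            Multiset.Rel (fun p q => q = p ∨ q = s p) (a ::ₘ A') B := by
          intro b hba hbB
          obtain ⟨B', rfl⟩ := Multiset.exists_cons_of_mem hbB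
          have hcancel : A' + Multiset.map s A' = B' + Multiset.map s B' := by
            have hb2 : a ::ₘ s a ::ₘ (A' + Multiset.map s A')
                = a ::ₘ s a ::ₘ (B' + Multiset.map s B') := by
              calc a ::ₘ s a ::ₘ (A' + Multiset.map s A')
                  = (a ::ₘ A') + Multiset.map s (a ::ₘ A') := by
                    rw [Multiset.map_cons, lem]
                _ = (b ::ₘ B') + Multiset.map s (b ::ₘ B') := h
                _ = b ::ₘ s b ::ₘ (B' + Multiset.map s B') := by
                    rw [Multiset.map_cons, lem]
                _ = a ::ₘ s a ::ₘ (B' + Multiset.map s B') := by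
                    rcases hba with rfl | rfl
                    · rfl
                    · rw [hs a, Multiset.cons_swap]
            exact (Multiset.cons_inj_right _).1 ((Multiset.cons_inj_right _).1 hb2)
          have hrel := ih A' (Multiset.lt_cons_self _ _) B' hcancel
          exact Multiset.Rel.cons (by tauto) hrel
        rcases haB with h1 | h1
        · exact key a (Or.inl rfl) h1
        · exact key (s a) (Or.inr rfl) h1
end
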